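/- arXiv:math/0703456 — 2 statements merged into one kernel-verified Lean document; each statement's English description precedes it below -/
import Mathlib

section
/- Let Δ_1, …, Δ_r and ∇_1, …, ∇_r be dual to each other centered nef-partitions in ℝ^d. Let I_1, …, I_l be a partition of {1, …, r} into nonempty subsets, and for I ⊆ {1, …, r} set Δ^I := Σ_{i∈I} Δ_i (Minkowski sum) and ∇_I := Conv(∪_{i∈I} ∇_i). Then Δ^{I_1}, …, Δ^{I_l} is a centered nef-partition of Δ = Δ_1 + ⋯ + Δ_r of length l whose dual centered nef-partition is ∇_{I_1}, …, ∇_{I_l}; that is, for each k one has ∇_{I_k} = {y ∈ ℝ^d : ⟨x,y⟩ ≥ −δ_{kk'} for all x ∈ Δ^{I_{k'}}, k' = 1, …, l}. -/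
open Pointwise

noncomputable section

/-- A point of `ℝ^n` all of whose coordinates are integers (a lattice point of `ℤ^n`). -/
def IsLatticePt {n : ℕ} (x : Fin n → ℝ) : Prop := ∀ k, ∃ m : ℤ, x k = (m : ℝ)

/-- A lattice polytope: the convex hull of finitely many lattice points. -/
def IsLatticePoly {n : ℕ} (P : Set (Fin n → ℝ)) : Prop :=
  ∃ V : Finset (Fin n → ℝ), V.Nonempty ∧ (∀ v ∈ V, IsLatticePt v) ∧
    P = convexHull ℝ (V : Set (Fin n → ℝ))

/-- The standard inner product pairing on `ℝ^n`. -/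
def pairR {n : ℕ} (x y : Fin n → ℝ) : ℝ := ∑ k, x k * y k

/-- The dual polytope `P* = {y : ⟨x,y⟩ ≥ -1 ∀ x ∈ P}`. -/
def dualPoly {n : ℕ} (P : Set (Fin n → ℝ)) : Set (Fin n → ℝ) :=
  {y | ∀ x ∈ P, -1 ≤ pairR x y}

/-- A reflexive polytope: a lattice polytope with `0` in its interior whose dual
polytope is again a lattice polytope. -/
def IsReflexivePoly {n : ℕ} (P : Set (Fin n → ℝ)) : Prop :=
  IsLatticePoly P ∧ (0 : Fin n → ℝ) ∈ interior P ∧ IsLatticePoly (dualPoly P)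

/-- The dimension of a polytope: the dimension of the direction of its affine span. -/
def polyDim {n : ℕ} (P : Set (Fin n → ℝ)) : ℕ :=
  Module.finrank ℝ (affineSpan ℝ P).direction

/-- A (full-dimensional) Gorenstein polytope of index `r`: `rP` has `m` as its unique
interior lattice point and `rP - m` is reflexive. -/
def IsGorensteinPoly {n : ℕ} (P : Set (Fin n → ℝ)) (r : ℕ) (m : Fin n → ℝ) : Prop :=
  IsLatticePoly P ∧ IsLatticePt m ∧
  (∀ x, IsLatticePt x → (x ∈ interior ((r : ℝ) • P) ↔ x = m)) ∧
  IsReflexivePoly ((fun x => x - m) '' ((r : ℝ) • P))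

/-- `y` is a point of the lattice dual to the (saturated) lattice `ℤ^n ∩ W` inside `W`. -/
def IsDualLatticePt {n : ℕ} (W : Submodule ℝ (Fin n → ℝ)) (y : Fin n → ℝ) : Prop :=
  y ∈ W ∧ ∀ x ∈ W, IsLatticePt x → ∃ m : ℤ, pairR x y = (m : ℝ)

/-- Reflexivity of a (possibly lower-dimensional) lattice polytope inside its linear
span: `0` is in the relative interior and the dual polytope taken inside the linear
span is a lattice polytope with respect to the dual lattice. -/
def IsReflexiveIn {n : ℕ} (P : Set (Fin n → ℝ)) : Prop :=
  IsLatticePoly P ∧ (0 : Fin n → ℝ) ∈ intrinsicInterior ℝ P ∧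
  ∃ V : Finset (Fin n → ℝ), V.Nonempty ∧
    (∀ v ∈ V, IsDualLatticePt (Submodule.span ℝ P) v) ∧
    {y | y ∈ Submodule.span ℝ P ∧ ∀ x ∈ P, -1 ≤ pairR x y} =
      convexHull ℝ (V : Set (Fin n → ℝ))

/-- Gorenstein polytope of index `r` (possibly lower-dimensional): `rP` has `m` as its
unique relative-interior lattice point and `rP - m` is reflexive within its span. -/
def IsGorensteinIn {n : ℕ} (P : Set (Fin n → ℝ)) (r : ℕ) (m : Fin n → ℝ) : Prop :=
  IsLatticePoly P ∧ IsLatticePt m ∧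
  (∀ x, IsLatticePt x → (x ∈ intrinsicInterior ℝ ((r : ℝ) • P) ↔ x = m)) ∧
  IsReflexiveIn ((fun x => x - m) '' ((r : ℝ) • P))

/-- The Minkowski sum `Δ 0 + ⋯ + Δ (r-1)` of a family of sets. -/
def minkSum {n r : ℕ} (Δ : Fin r → Set (Fin n → ℝ)) : Set (Fin n → ℝ) :=
  {x | ∃ f : Fin r → (Fin n → ℝ), (∀ i, f i ∈ Δ i) ∧ x = ∑ i, f i}

/-- The Minkowski sum `Σ_{i ∈ I} Δ i`. -/
def minkSumOver {n r : ℕ} (I : Finset (Fin r)) (Δ : Fin r → Set (Fin n → ℝ)) :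
    Set (Fin n → ℝ) :=
  {x | ∃ f : Fin r → (Fin n → ℝ), (∀ i ∈ I, f i ∈ Δ i) ∧ x = ∑ i ∈ I, f i}

/-- The point `x × e_i ∈ ℝ^d × ℝ^r`. -/
def cayleyPt {d r : ℕ} (x : Fin d → ℝ) (i : Fin r) : Fin (d + r) → ℝ :=
  Fin.append x (fun j => if j = i then 1 else 0)

/-- The Cayley polytope `Δ 0 * ⋯ * Δ (r-1) ⊂ ℝ^d × ℝ^r`. -/
def cayley {d r : ℕ} (Δ : Fin r → Set (Fin d → ℝ)) : Set (Fin (d + r) → ℝ) :=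
  convexHull ℝ (⋃ i, (fun x => cayleyPt x i) '' Δ i)

/-- `F` is a facet of `P`: a nonempty exposed face of dimension one less. -/
def IsFacetOf {n : ℕ} (F P : Set (Fin n → ℝ)) : Prop :=
  IsExposed ℝ P F ∧ F.Nonempty ∧ polyDim F + 1 = polyDim P

/-- A special `(r-1)`-simplex of `P`: `r` affinely independent lattice points of `P`
such that every facet of `P` contains exactly `r - 1` of them. -/
def IsSpecialSimplex {n : ℕ} (P : Set (Fin n → ℝ)) (r : ℕ) (v : Fin r → Fin n → ℝ) : Prop :=
  (∀ i, IsLatticePt (v i) ∧ v i ∈ P) ∧ AffineIndependent ℝ v ∧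
  ∀ F, IsFacetOf F P → ∃! i, v i ∉ F

/-- `∇_i = {y : ⟨x,y⟩ ≥ -δ_{ij} ∀ x ∈ Δ_j ∀ j}`, the polytopes of the dual nef-partition. -/
def nefDual {d r : ℕ} (Δ : Fin r → Set (Fin d → ℝ)) (i : Fin r) : Set (Fin d → ℝ) :=
  {y | ∀ j, ∀ x ∈ Δ j, -(if i = j then (1 : ℝ) else 0) ≤ pairR x y}

/-- A centered nef-partition: lattice polytopes containing `0` whose Minkowski sum is a
reflexive polytope with `0` as its unique interior lattice point. -/
def IsCenteredNefPartition {d r : ℕ} (Δ : Fin r → Set (Fin d → ℝ)) : Prop :=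
  (∀ i, IsLatticePoly (Δ i) ∧ (0 : Fin d → ℝ) ∈ Δ i) ∧
  IsReflexivePoly (minkSum Δ) ∧
  ∀ x, IsLatticePt x → x ∈ interior (minkSum Δ) → x = 0

/-- Two centered nef-partitions dual to each other. -/
def AreDualNefPartitions {d r : ℕ} (Δ Nb : Fin r → Set (Fin d → ℝ)) : Prop :=
  IsCenteredNefPartition Δ ∧ IsCenteredNefPartition Nb ∧
  (∀ i, Nb i = nefDual Δ i) ∧ (∀ i, Δ i = nefDual Nb i)

/-- A Gorenstein cone with its distinguished lattice point `nσ`: a full-dimensional cone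
generated by finitely many lattice points on the hyperplane `⟨·, nσ⟩ = 1`. -/
def IsGorensteinCone {n : ℕ} (σ : Set (Fin n → ℝ)) (nσ : Fin n → ℝ) : Prop :=
  IsLatticePt nσ ∧ Submodule.span ℝ σ = ⊤ ∧
  ∃ V : Finset (Fin n → ℝ), V.Nonempty ∧
    (∀ v ∈ V, IsLatticePt v ∧ pairR v nσ = 1) ∧
    σ = {x | ∃ c : (Fin n → ℝ) → ℝ, (∀ v, 0 ≤ c v) ∧ x = ∑ v ∈ V, c v • v}

/-- The dual cone. -/
def dualCone {n : ℕ} (σ : Set (Fin n → ℝ)) : Set (Fin n → ℝ) :=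
  {y | ∀ x ∈ σ, 0 ≤ pairR x y}

/-- Integrally closed lattice polytope: every lattice point of `k • P` is a sum of `k`
lattice points of `P`. -/
def IntegrallyClosed {n : ℕ} (P : Set (Fin n → ℝ)) : Prop :=
  ∀ (k : ℕ) (x : Fin n → ℝ), IsLatticePt x → x ∈ (k : ℝ) • P →
    ∃ v : Fin k → (Fin n → ℝ), (∀ j, IsLatticePt (v j) ∧ v j ∈ P) ∧ x = ∑ j, v j

/-!
Everything is read through `minPair P y = min_{x ∈ P} ⟨x, y⟩`, which is additive under Minkowski
sums and nonpositive on polytopes containing `0`. So `y` lies in the dual of the collected partition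
at `k` iff `∑_{j ∈ I_{k'}} minPair Δ_j y ≥ -δ_{kk'}` for all `k'`, which forces `minPair Δ_j y = 0`
for `j ∉ I_k` and `T := -∑_{j ∈ I_k} minPair Δ_j y ≤ 1`. Then `T⁻¹ • y` lies in the lattice
polytope `Δ*`; writing it as a convex combination of vertices `v`, concavity of `minPair Δ_j` and
`∑_j minPair Δ_j v ≥ -1` leave no slack, so every vertex used has integral values
`minPair Δ_j v ≤ 0` summing to `-1` and vanishing off `I_k`: it lies in some `∇_i` with `i ∈ I_k`.
-/

section Pairing

variable {n : ℕ}

lemma pairR_add_left (x x' y : Fin n → ℝ) : pairR (x + x') y = pairR x y + pairR x' y :=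
  add_dotProduct x x' y

lemma pairR_smul_right (c : ℝ) (x y : Fin n → ℝ) : pairR x (c • y) = c * pairR x y :=
  dotProduct_smul c x y

lemma pairR_sum_right {ι : Type*} (s : Finset ι) (x : Fin n → ℝ) (v : ι → Fin n → ℝ) :
    pairR x (∑ i ∈ s, v i) = ∑ i ∈ s, pairR x (v i) :=
  dotProduct_sum x s v

lemma pairR_zero_right (x : Fin n → ℝ) : pairR x 0 = 0 :=
  dotProduct_zero x

lemma isLinearMap_pairR_left (y : Fin n → ℝ) : IsLinearMap ℝ fun x => pairR x y :=
  ⟨fun x x' => add_dotProduct x x' y, fun c x => smul_dotProduct c x y⟩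

lemma isLinearMap_pairR_right (x : Fin n → ℝ) : IsLinearMap ℝ (pairR x) :=
  ⟨dotProduct_add x, fun c y => dotProduct_smul c x y⟩

lemma IsLatticePt.add {x y : Fin n → ℝ} (hx : IsLatticePt x) (hy : IsLatticePt y) :
    IsLatticePt (x + y) := fun k => by
  obtain ⟨a, ha⟩ := hx k
  obtain ⟨b, hb⟩ := hy k
  exact ⟨a + b, by simp [ha, hb]⟩

lemma IsLatticePt.exists_int_pairR_eq {x y : Fin n → ℝ} (hx : IsLatticePt x)
    (hy : IsLatticePt y) : ∃ m : ℤ, pairR x y = m := by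
  choose a ha using hx
  choose b hb using hy
  exact ⟨∑ k, a k * b k, by simp [pairR, ha, hb]⟩

end Pairing

section LatticePoly

variable {n : ℕ}

lemma IsLatticePoly.add {A B : Set (Fin n → ℝ)} (hA : IsLatticePoly A) (hB : IsLatticePoly B) :
    IsLatticePoly (A + B) := by
  obtain ⟨V, hVne, hVlat, rfl⟩ := hA
  obtain ⟨W, hWne, hWlat, rfl⟩ := hB
  refine ⟨V + W, hVne.add hWne, ?_, by rw [Finset.coe_add, convexHull_add]⟩
  simp only [Finset.mem_add]
  rintro _ ⟨a, ha, b, hb, rfl⟩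
  exact (hVlat a ha).add (hWlat b hb)

lemma isLatticePoly_zero : IsLatticePoly (0 : Set (Fin n → ℝ)) :=
  ⟨{0}, Finset.singleton_nonempty 0, by simpa [IsLatticePt] using fun _ => ⟨0, by simp⟩,
    by rw [Finset.coe_singleton, convexHull_singleton, Set.singleton_zero]⟩

lemma isLatticePoly_sum {ι : Type*} {s : Finset ι} {P : ι → Set (Fin n → ℝ)}
    (hP : ∀ i ∈ s, IsLatticePoly (P i)) : IsLatticePoly (∑ i ∈ s, P i) :=
  Finset.sum_induction P IsLatticePoly (fun _ _ => IsLatticePoly.add) isLatticePoly_zero hP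

lemma IsLatticePoly.exists_isLatticePt_forall_pairR_le {P : Set (Fin n → ℝ)}
    (hP : IsLatticePoly P) (y : Fin n → ℝ) :
    ∃ w ∈ P, IsLatticePt w ∧ ∀ x ∈ P, pairR w y ≤ pairR x y := by
  obtain ⟨V, hVne, hVlat, rfl⟩ := hP
  obtain ⟨w, hw, hmin⟩ := V.exists_min_image (fun v => pairR v y) hVne
  exact ⟨w, subset_convexHull ℝ _ hw, hVlat w hw, fun x hx =>
    convexHull_min hmin (convex_halfSpace_ge (isLinearMap_pairR_left y) _) hx⟩

end LatticePoly

section MinkowskiSum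

variable {n r : ℕ}

lemma minkSumOver_eq_sum (I : Finset (Fin r)) (Δ : Fin r → Set (Fin n → ℝ)) :
    minkSumOver I Δ = ∑ i ∈ I, Δ i := by
  ext x
  simp [minkSumOver, Set.mem_finsetSum, eq_comm]

lemma minkSum_eq_sum (Δ : Fin r → Set (Fin n → ℝ)) : minkSum Δ = ∑ i, Δ i := by
  ext x
  simp [minkSum, Set.mem_fintype_sum, eq_comm]

end MinkowskiSum

lemma Finset.sum_sum_eq_sum_of_partition {ι κ M : Type*} [Fintype ι] [Fintype κ] [DecidableEq ι]
    [AddCommMonoid M] {I : κ → Finset ι} (hdisj : ∀ k k', k ≠ k' → Disjoint (I k) (I k'))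
    (hcover : ∀ i, ∃ k, i ∈ I k) (f : ι → M) : ∑ k, ∑ i ∈ I k, f i = ∑ i, f i := by
  rw [← Finset.sum_biUnion fun k _ k' _ => hdisj k k']
  exact Finset.sum_congr (Finset.eq_univ_of_forall fun i => by simpa using hcover i) fun _ _ => rfl

lemma exists_eq_neg_one_of_sum_eq_neg_one {ι : Type*} [Fintype ι] {a : ι → ℝ}
    (hint : ∀ i, ∃ m : ℤ, a i = m) (hle : ∀ i, a i ≤ 0) (hsum : ∑ i, a i = -1) :
    ∃ i, a i = -1 ∧ ∀ j ≠ i, a j = 0 := by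
  classical
  obtain ⟨i, -, hi⟩ := Finset.exists_ne_zero_of_sum_ne_zero (by rw [hsum]; norm_num)
  have hi1 : a i ≤ -1 := by
    obtain ⟨m, hm⟩ := hint i
    have hm0 : m ≤ 0 := by exact_mod_cast hm ▸ hle i
    have hm1 : m ≠ 0 := by exact_mod_cast hm ▸ hi
    rw [hm]
    exact_mod_cast (by omega : m ≤ -1)
  have hsplit := Finset.add_sum_erase _ a (Finset.mem_univ i)
  have hrest : ∑ j ∈ Finset.univ.erase i, a j = 0 := by
    linarith [Finset.sum_nonpos fun j (_ : j ∈ Finset.univ.erase i) => hle j]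
  refine ⟨i, by linarith, fun j hj => ?_⟩
  exact (Finset.sum_eq_zero_iff_of_nonpos fun j _ => hle j).1 hrest j
    (Finset.mem_erase.2 ⟨hj, Finset.mem_univ j⟩)

lemma Finset.sum_smul_mem_convexHull_of_ne_zero {ι E : Type*} [AddCommGroup E] [Module ℝ E]
    {s : Set E} (t : Finset ι) {w : ι → ℝ} {z : ι → E} (hw₀ : ∀ i ∈ t, 0 ≤ w i)
    (hw₁ : ∑ i ∈ t, w i = 1) (hz : ∀ i ∈ t, w i ≠ 0 → z i ∈ s) :
    ∑ i ∈ t, w i • z i ∈ convexHull ℝ s := by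
  classical
  rw [← t.centerMass_eq_of_sum_1 z hw₁, ← Finset.centerMass_filter_ne_zero]
  refine Finset.centerMass_mem_convexHull _ (fun i hi => hw₀ i (Finset.mem_filter.1 hi).1) ?_
    fun i hi => hz i (Finset.mem_filter.1 hi).1 (Finset.mem_filter.1 hi).2
  rw [Finset.sum_filter_ne_zero, hw₁]
  exact one_pos

section MinPair

variable {n : ℕ}

-- A junk value unless `⟨·, y⟩` attains its minimum on `P`, as it does on lattice polytopes.
def minPair (P : Set (Fin n → ℝ)) (y : Fin n → ℝ) : ℝ :=
  sInf ((fun x => pairR x y) '' P)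

lemma minPair_eq_of_forall_le {P : Set (Fin n → ℝ)} {w y : Fin n → ℝ} (hw : w ∈ P)
    (hmin : ∀ x ∈ P, pairR w y ≤ pairR x y) : minPair P y = pairR w y :=
  IsLeast.csInf_eq ⟨⟨w, hw, rfl⟩, by rintro _ ⟨x, hx, rfl⟩; exact hmin x hx⟩

lemma minPair_smul (P : Set (Fin n → ℝ)) {c : ℝ} (hc : 0 ≤ c) (y : Fin n → ℝ) :
    minPair P (c • y) = c * minPair P y := by
  rw [minPair, minPair, ← smul_eq_mul, ← Real.sInf_smul_of_nonneg hc, ← Set.image_smul,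
    Set.image_image]
  simp_rw [pairR_smul_right, smul_eq_mul]

lemma minPair_zero (y : Fin n → ℝ) : minPair 0 y = 0 := by
  rw [minPair_eq_of_forall_le Set.zero_mem_zero (by simp)]
  simp [pairR]

variable {P : Set (Fin n → ℝ)}

lemma IsLatticePoly.exists_isLatticePt_minPair_eq (hP : IsLatticePoly P) (y : Fin n → ℝ) :
    ∃ w ∈ P, IsLatticePt w ∧ pairR w y = minPair P y := by
  obtain ⟨w, hw, hwlat, hmin⟩ := hP.exists_isLatticePt_forall_pairR_le y
  exact ⟨w, hw, hwlat, (minPair_eq_of_forall_le hw hmin).symm⟩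

lemma IsLatticePoly.minPair_le (hP : IsLatticePoly P) {x : Fin n → ℝ} (hx : x ∈ P)
    (y : Fin n → ℝ) : minPair P y ≤ pairR x y := by
  obtain ⟨w, hw, -, hmin⟩ := hP.exists_isLatticePt_forall_pairR_le y
  exact minPair_eq_of_forall_le hw hmin ▸ hmin x hx

lemma IsLatticePoly.le_minPair_iff (hP : IsLatticePoly P) {c : ℝ} {y : Fin n → ℝ} :
    c ≤ minPair P y ↔ ∀ x ∈ P, c ≤ pairR x y := by
  refine ⟨fun hc x hx => hc.trans (hP.minPair_le hx y), fun h => ?_⟩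
  obtain ⟨w, hw, -, hwy⟩ := hP.exists_isLatticePt_minPair_eq y
  exact hwy ▸ h w hw

lemma IsLatticePoly.minPair_nonpos (hP : IsLatticePoly P) (h0 : 0 ∈ P) (y : Fin n → ℝ) :
    minPair P y ≤ 0 := by
  simpa [pairR] using hP.minPair_le h0 y

lemma IsLatticePoly.exists_int_minPair_eq (hP : IsLatticePoly P) {y : Fin n → ℝ}
    (hy : IsLatticePt y) : ∃ m : ℤ, minPair P y = m := by
  obtain ⟨w, -, hwlat, hwy⟩ := hP.exists_isLatticePt_minPair_eq y
  exact hwy ▸ hwlat.exists_int_pairR_eq hy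

lemma IsLatticePoly.sum_mul_minPair_le (hP : IsLatticePoly P) {ι : Type*} (s : Finset ι)
    {μ : ι → ℝ} (hμ : ∀ i ∈ s, 0 ≤ μ i) (v : ι → Fin n → ℝ) :
    ∑ i ∈ s, μ i * minPair P (v i) ≤ minPair P (∑ i ∈ s, μ i • v i) := by
  refine hP.le_minPair_iff.2 fun x hx => ?_
  simp_rw [pairR_sum_right, pairR_smul_right]
  exact Finset.sum_le_sum fun i hi => mul_le_mul_of_nonneg_left (hP.minPair_le hx _) (hμ i hi)

lemma IsLatticePoly.minPair_add {A B : Set (Fin n → ℝ)} (hA : IsLatticePoly A)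
    (hB : IsLatticePoly B) (y : Fin n → ℝ) : minPair (A + B) y = minPair A y + minPair B y := by
  obtain ⟨a, ha, -, hay⟩ := hA.exists_isLatticePt_minPair_eq y
  obtain ⟨b, hb, -, hby⟩ := hB.exists_isLatticePt_minPair_eq y
  rw [← hay, ← hby, ← pairR_add_left]
  refine minPair_eq_of_forall_le (Set.add_mem_add ha hb) ?_
  rintro _ ⟨x, hx, x', hx', rfl⟩
  rw [pairR_add_left, pairR_add_left, hay, hby]
  exact add_le_add (hA.minPair_le hx y) (hB.minPair_le hx' y)

lemma minPair_sum {ι : Type*} {s : Finset ι} {P : ι → Set (Fin n → ℝ)}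
    (hP : ∀ i ∈ s, IsLatticePoly (P i)) (y : Fin n → ℝ) :
    minPair (∑ i ∈ s, P i) y = ∑ i ∈ s, minPair (P i) y := by
  classical
  induction s using Finset.induction_on with
  | empty => simp [minPair_zero]
  | insert a s ha ih =>
    have hs : ∀ i ∈ s, IsLatticePoly (P i) := fun i hi => hP i (Finset.mem_insert_of_mem hi)
    rw [Finset.sum_insert ha, Finset.sum_insert ha,
      (hP a (Finset.mem_insert_self a s)).minPair_add (isLatticePoly_sum hs), ih hs]

end MinPair

section NefDual

variable {d r : ℕ} {Δ : Fin r → Set (Fin d → ℝ)}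

lemma mem_dualPoly_iff {P : Set (Fin d → ℝ)} (hP : IsLatticePoly P) {y : Fin d → ℝ} :
    y ∈ dualPoly P ↔ -1 ≤ minPair P y :=
  hP.le_minPair_iff.symm

lemma mem_nefDual_iff (hΔ : ∀ j, IsLatticePoly (Δ j)) {i : Fin r} {y : Fin d → ℝ} :
    y ∈ nefDual Δ i ↔ ∀ j, -(if i = j then (1 : ℝ) else 0) ≤ minPair (Δ j) y :=
  forall_congr' fun j => (hΔ j).le_minPair_iff.symm

lemma zero_mem_nefDual (i : Fin r) : (0 : Fin d → ℝ) ∈ nefDual Δ i := fun j x _ => by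
  rw [pairR_zero_right, neg_nonpos]
  split_ifs <;> norm_num

lemma convex_nefDual (i : Fin r) : Convex ℝ (nefDual Δ i) := by
  have : nefDual Δ i = ⋂ j, ⋂ x ∈ Δ j, {y | -(if i = j then (1 : ℝ) else 0) ≤ pairR x y} := by
    ext y
    simp [nefDual]
  rw [this]
  exact convex_iInter fun j => convex_iInter₂ fun x _ =>
    convex_halfSpace_ge (isLinearMap_pairR_right x) _

lemma mem_iUnion_nefDual_of_isLatticePt
    (hΔ : ∀ i, IsLatticePoly (Δ i) ∧ (0 : Fin d → ℝ) ∈ Δ i) {I : Finset (Fin r)}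
    {v : Fin d → ℝ} (hv : IsLatticePt v) (hout : ∀ j ∉ I, minPair (Δ j) v = 0)
    (hsum : ∑ j, minPair (Δ j) v = -1) : v ∈ ⋃ i ∈ I, nefDual Δ i := by
  obtain ⟨i, hi, hrest⟩ := exists_eq_neg_one_of_sum_eq_neg_one
    (fun j => (hΔ j).1.exists_int_minPair_eq hv) (fun j => (hΔ j).1.minPair_nonpos (hΔ j).2 v)
    hsum
  have hiI : i ∈ I := by
    by_contra hiI
    linarith [hout i hiI]
  refine Set.mem_iUnion₂.2 ⟨i, hiI, (mem_nefDual_iff fun j => (hΔ j).1).2 fun j => ?_⟩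
  by_cases hij : i = j
  · subst hij
    simp [hi]
  · simp [hij, hrest j (Ne.symm hij)]

theorem mem_convexHull_iUnion_nefDual_of_sum_minPair_eq_neg_one
    (hΔ : ∀ i, IsLatticePoly (Δ i) ∧ (0 : Fin d → ℝ) ∈ Δ i)
    (hdual : IsLatticePoly (dualPoly (minkSum Δ))) {I : Finset (Fin r)} {y : Fin d → ℝ}
    (hout : ∀ j ∉ I, minPair (Δ j) y = 0) (hsum : ∑ j, minPair (Δ j) y = -1) :
    y ∈ convexHull ℝ (⋃ i ∈ I, nefDual Δ i) := by
  set m : Fin r → (Fin d → ℝ) → ℝ := fun j => minPair (Δ j)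
  have hmem_dual : ∀ z, z ∈ dualPoly (minkSum Δ) ↔ -1 ≤ ∑ j, m j z := fun z => by
    rw [minkSum_eq_sum, mem_dualPoly_iff (isLatticePoly_sum fun i _ => (hΔ i).1),
      minPair_sum fun i _ => (hΔ i).1]
  obtain ⟨V, -, hVlat, hVeq⟩ := hdual
  obtain ⟨μ, hμ0, hμ1, rfl⟩ := Finset.mem_convexHull'.1 (hVeq ▸ (hmem_dual y).2 hsum.ge)
  have hV : ∀ v ∈ V, μ v * -1 ≤ μ v * ∑ j, m j v := fun v hv =>
    mul_le_mul_of_nonneg_left ((hmem_dual v).1 (hVeq ▸ subset_convexHull ℝ _ hv)) (hμ0 v hv)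
  have hconc : ∀ j ∈ Finset.univ, ∑ v ∈ V, μ v * m j v ≤ m j (∑ v ∈ V, μ v • v) :=
    fun j _ => (hΔ j).1.sum_mul_minPair_le V hμ0 id
  -- `-1 ≤ ∑_v μ_v ∑_j m_j v = ∑_j ∑_v μ_v m_j v ≤ ∑_j m_j y = -1`: both inequalities are tight.
  have hswap : ∑ v ∈ V, μ v * ∑ j, m j v = ∑ j, ∑ v ∈ V, μ v * m j v := by
    simp_rw [Finset.mul_sum]
    exact Finset.sum_comm
  have hbot : ∑ v ∈ V, μ v * -1 = -1 := by rw [← Finset.sum_mul, hμ1, one_mul]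
  have h₁ := Finset.sum_le_sum hV
  have h₂ := Finset.sum_le_sum hconc
  have htight_v := (Finset.sum_eq_sum_iff_of_le hV).1 (by linarith)
  have htight_j := (Finset.sum_eq_sum_iff_of_le hconc).1 (by linarith)
  refine V.sum_smul_mem_convexHull_of_ne_zero hμ0 hμ1 fun v hv hμv => ?_
  refine mem_iUnion_nefDual_of_isLatticePt hΔ (hVlat v hv) (fun j hj => ?_)
    (mul_left_cancel₀ hμv (htight_v v hv)).symm
  have hj0 : ∑ w ∈ V, μ w * m j w = 0 := (htight_j j (Finset.mem_univ j)).trans (hout j hj)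
  have := (Finset.sum_eq_zero_iff_of_nonpos fun w hw => mul_nonpos_of_nonneg_of_nonpos
    (hμ0 w hw) ((hΔ j).1.minPair_nonpos (hΔ j).2 w)).1 hj0 v hv
  exact (mul_eq_zero.1 this).resolve_left hμv

end NefDual

section Collecting

variable {d r : ℕ} {Δ : Fin r → Set (Fin d → ℝ)}

theorem mem_convexHull_iUnion_nefDual
    (hΔ : ∀ i, IsLatticePoly (Δ i) ∧ (0 : Fin d → ℝ) ∈ Δ i)
    (hdual : IsLatticePoly (dualPoly (minkSum Δ))) {I : Finset (Fin r)} (hI : I.Nonempty)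
    {y : Fin d → ℝ} (hout : ∀ j ∉ I, minPair (Δ j) y = 0)
    (hin : -1 ≤ ∑ j ∈ I, minPair (Δ j) y) : y ∈ convexHull ℝ (⋃ i ∈ I, nefDual Δ i) := by
  obtain ⟨i₀, hi₀⟩ := hI
  have hm_nonpos : ∀ j, minPair (Δ j) y ≤ 0 := fun j => (hΔ j).1.minPair_nonpos (hΔ j).2 y
  set T := -∑ j ∈ I, minPair (Δ j) y with hT
  have hsum : ∑ j, minPair (Δ j) y = -T := by
    rw [hT, neg_neg]
    exact (Finset.sum_subset (Finset.subset_univ I) fun j _ hj => hout j hj).symm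
  rcases (neg_nonneg.2 (Finset.sum_nonpos fun j _ => hm_nonpos j) : 0 ≤ T).eq_or_lt
    with hT0 | hTpos
  · have hzero := (Finset.sum_eq_zero_iff_of_nonpos fun j _ => hm_nonpos j).1
      (by linarith : ∑ j, minPair (Δ j) y = 0)
    refine subset_convexHull ℝ _ (Set.mem_iUnion₂.2 ⟨i₀, hi₀,
      (mem_nefDual_iff fun j => (hΔ j).1).2 fun j => ?_⟩)
    rw [hzero j (Finset.mem_univ j), neg_nonpos]
    split_ifs <;> norm_num
  · have hT_inv : 0 ≤ T⁻¹ := inv_nonneg.2 hTpos.le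
    have hy' : T⁻¹ • y ∈ convexHull ℝ (⋃ i ∈ I, nefDual Δ i) := by
      refine mem_convexHull_iUnion_nefDual_of_sum_minPair_eq_neg_one hΔ hdual
        (fun j hj => by rw [minPair_smul _ hT_inv, hout j hj, mul_zero]) ?_
      simp_rw [minPair_smul _ hT_inv]
      rw [← Finset.mul_sum, hsum, mul_neg, inv_mul_cancel₀ hTpos.ne']
    have h0 : (0 : Fin d → ℝ) ∈ convexHull ℝ (⋃ i ∈ I, nefDual Δ i) :=
      subset_convexHull ℝ _ (Set.mem_iUnion₂.2 ⟨i₀, hi₀, zero_mem_nefDual i₀⟩)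
    have := (convex_convexHull ℝ _).smul_mem_of_zero_mem h0 hy' ⟨hTpos.le, by linarith⟩
    rwa [smul_inv_smul₀ hTpos.ne'] at this

theorem convexHull_iUnion_nefDual_eq_nefDual_minkSumOver
    (hΔ : ∀ i, IsLatticePoly (Δ i) ∧ (0 : Fin d → ℝ) ∈ Δ i)
    (hdual : IsLatticePoly (dualPoly (minkSum Δ))) {l : ℕ} {I : Fin l → Finset (Fin r)}
    (hne : ∀ k, (I k).Nonempty) (hdisj : ∀ k k', k ≠ k' → Disjoint (I k) (I k'))
    (hcover : ∀ i : Fin r, ∃ k, i ∈ I k) (k : Fin l) :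
    convexHull ℝ (⋃ i ∈ I k, nefDual Δ i) = nefDual (fun k' => minkSumOver (I k') Δ) k := by
  have hmem : ∀ y, y ∈ nefDual (fun k' => minkSumOver (I k') Δ) k ↔
      ∀ k', -(if k = k' then (1 : ℝ) else 0) ≤ ∑ j ∈ I k', minPair (Δ j) y := fun y => by
    simp only [minkSumOver_eq_sum]
    rw [mem_nefDual_iff fun k' => isLatticePoly_sum fun i _ => (hΔ i).1]
    simp only [minPair_sum fun i _ => (hΔ i).1]
  apply subset_antisymm
  · refine convexHull_min (Set.iUnion₂_subset fun i hi y hy => (hmem y).2 fun k' => ?_)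
      (convex_nefDual k)
    have hik' : i ∈ I k' ↔ k = k' :=
      ⟨fun hi' => by_contra fun h => Finset.disjoint_left.1 (hdisj k k' h) hi hi', (· ▸ hi)⟩
    calc -(if k = k' then (1 : ℝ) else 0) = ∑ j ∈ I k', -(if i = j then (1 : ℝ) else 0) := by
          rw [Finset.sum_neg_distrib, Finset.sum_ite_eq]
          simp only [hik']
      _ ≤ ∑ j ∈ I k', minPair (Δ j) y :=
          Finset.sum_le_sum fun j _ => (mem_nefDual_iff fun j => (hΔ j).1).1 hy j
  · intro y hy
    have hy := (hmem y).1 hy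
    refine mem_convexHull_iUnion_nefDual hΔ hdual (hne k) (fun j hj => ?_) (by simpa using hy k)
    obtain ⟨k', hk'⟩ := hcover j
    have hm_nonpos : ∀ i ∈ I k', minPair (Δ i) y ≤ 0 :=
      fun i _ => (hΔ i).1.minPair_nonpos (hΔ i).2 y
    have hkk' : k ≠ k' := fun h => hj (h ▸ hk')
    have h0 : ∑ i ∈ I k', minPair (Δ i) y = 0 :=
      le_antisymm (Finset.sum_nonpos hm_nonpos) (by simpa [hkk'] using hy k')
    exact (Finset.sum_eq_zero_iff_of_nonpos hm_nonpos).1 h0 j hk'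

end Collecting

/-- Collecting a nef-partition along a partition `I_1, …, I_l` of
`{1, …, r}` yields a centered nef-partition `Δ^{I_1}, …, Δ^{I_l}` of `Δ` whose dual
centered nef-partition is `∇_{I_1}, …, ∇_{I_l}` (convex hulls). -/
theorem nef_partition_collecting {d r l : ℕ}
    (Δ Nb : Fin r → Set (Fin d → ℝ))
    (h : AreDualNefPartitions Δ Nb)
    (I : Fin l → Finset (Fin r))
    (hne : ∀ k, (I k).Nonempty)
    (hdisj : ∀ k k', k ≠ k' → Disjoint (I k) (I k'))
    (hcover : ∀ i : Fin r, ∃ k, i ∈ I k) :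
    IsCenteredNefPartition (fun k => minkSumOver (I k) Δ) ∧
    minkSum (fun k => minkSumOver (I k) Δ) = minkSum Δ ∧
    (∀ k, convexHull ℝ (⋃ i ∈ I k, Nb i) =
      nefDual (fun k' => minkSumOver (I k') Δ) k) := by
  obtain ⟨⟨hΔ, hrefl, hinterior⟩, -, hNb, -⟩ := h
  have hsum : minkSum (fun k => minkSumOver (I k) Δ) = minkSum Δ := by
    simp only [minkSum_eq_sum, minkSumOver_eq_sum]
    exact Finset.sum_sum_eq_sum_of_partition hdisj hcover Δ
  refine ⟨⟨fun k => ?_, hsum ▸ hrefl, hsum ▸ hinterior⟩, hsum, fun k => ?_⟩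
  · simp only [minkSumOver_eq_sum]
    exact ⟨isLatticePoly_sum fun i _ => (hΔ i).1, by
      simpa using Set.finsetSum_mem_finsetSum (I k) Δ 0 fun i _ => (hΔ i).2⟩
  · simp only [hNb]
    exact convexHull_iUnion_nefDual_eq_nefDual_minkSumOver hΔ hrefl.2.2 hne hdisj hcover k
end
end

section
/- Let Δ_1, …, Δ_r and ∇_1, …, ∇_r be dual to each other centered proper nef-partitions in ℝ^d, and let {1, …, r} = I ⊔ J with I, J nonempty. Set Δ^I := Σ_{i∈I} Δ_i, Δ^J := Σ_{j∈J} Δ_j, and ∇_I := Conv(∪_{i∈I} ∇_i). If 0 lies in the relative interior of Δ^I, then: (a) 0 lies in the relative interior of Δ^J; (b) lin(Δ^I) ∩ lin(Δ^J) = {0} and lin(Δ^I) + lin(Δ^J) = ℝ^d, where lin(·) denotes the linear span; (c) ∇_I = {y ∈ lin(Δ^J)^⊥ : ⟨x,y⟩ ≥ −1 for all x ∈ Δ^I}, i.e. ∇_I is the dual of Δ^I inside the orthogonal complement of lin(Δ^J). -/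
open Pointwise

noncomputable section

/-!
Write `Δ^I`, `Δ^J` for the two partial sums. Since `⟨Δ_j, ∇_i⟩ ≥ 0` for `i ≠ j`, each `∇_j`
with `j ∈ J` is nonnegative on `Δ^I`, and a functional that is nonnegative on a set containing a
negative multiple of each of its points vanishes on its span; as `0 ∈ relint Δ^I`, this gives
`lin Δ^I ⊥ ∇_J`. A vector pairing nonnegatively with every `∇_k` is `0`, because `∇` is a
neighbourhood of `0`. Splitting a small multiple `t • -b` of a point `b ∈ Δ^J` as `a + b'` in
`Δ = Δ^I + Δ^J`, the vector `t • b + b' = -a` is nonnegative on `∇_I` and orthogonal to `∇_J`, hence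
`0`; so `Δ^J` also contains negative multiples of its points and `lin Δ^J ⊥ ∇_I`. Parts (a) and
(b) follow. For (c), the vertices of `Δ*` are lattice points, and integrality puts each of them in
a single `∇_k`; so a point of the right-hand side is a convex combination of a point of
`conv ∇_I` and a point of `(lin Δ^I)^⊥`, and the latter lies in
`(lin Δ^I)^⊥ ∩ (lin Δ^J)^⊥ = 0`.
-/

open Filter Topology

section RelativeInterior

variable {E : Type*} [AddCommGroup E] [Module ℝ E] [TopologicalSpace E] {s : Set E}

theorem zero_mem_intrinsicInterior_iff (hs : (0 : E) ∈ s) :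
    (0 : E) ∈ intrinsicInterior ℝ s ↔ ∃ u ∈ 𝓝 (0 : E), u ∩ Submodule.span ℝ s ⊆ s := by
  have hspan : (affineSpan ℝ s : Set E) = Submodule.span ℝ s := by
    rw [← affineSpan_insert_zero, Set.insert_eq_of_mem hs]
  rw [mem_intrinsicInterior]
  constructor
  · rintro ⟨y, hy, hy0⟩
    obtain ⟨u, hu, hus⟩ := (mem_nhds_subtype _ _ _).1 (mem_interior_iff_mem_nhds.1 hy)
    refine ⟨u, hy0 ▸ hu, fun x ⟨hxu, hxs⟩ => ?_⟩
    rw [← hspan] at hxs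
    exact hus (show (⟨x, hxs⟩ : affineSpan ℝ s) ∈ Subtype.val ⁻¹' u from hxu)
  · rintro ⟨u, hu, hus⟩
    refine ⟨⟨0, subset_affineSpan ℝ s hs⟩,
      mem_interior_iff_mem_nhds.2 ((mem_nhds_subtype _ _ _).2 ⟨u, hu, ?_⟩), rfl⟩
    rintro ⟨x, hx⟩ hxu
    exact hus ⟨hxu, hspan ▸ hx⟩

variable [ContinuousSMul ℝ E]

theorem exists_pos_smul_mem_of_mem_nhds_zero (hs : s ∈ 𝓝 (0 : E)) (v : E) :
    ∃ t : ℝ, 0 < t ∧ t • v ∈ s := by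
  have hv : ∀ᶠ t : ℝ in 𝓝[>] 0, t • v ∈ s :=
    ((absorbent_nhds_zero (𝕜 := ℝ) hs).eventually_nhdsNE_zero v).filter_mono
      (nhdsWithin_mono _ fun _ ht => ne_of_gt ht)
  exact (eventually_mem_nhdsWithin.and hv).exists

theorem exists_pos_smul_mem_of_zero_mem_intrinsicInterior
    (h : (0 : E) ∈ intrinsicInterior ℝ s) {v : E} (hv : v ∈ Submodule.span ℝ s) :
    ∃ t : ℝ, 0 < t ∧ t • v ∈ s := by
  obtain ⟨u, hu, hus⟩ := (zero_mem_intrinsicInterior_iff (intrinsicInterior_subset h)).1 h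
  obtain ⟨t, ht, htv⟩ := exists_pos_smul_mem_of_mem_nhds_zero hu v
  exact ⟨t, ht, hus ⟨htv, (Submodule.span ℝ s).smul_mem t hv⟩⟩

end RelativeInterior

section Orthogonal

theorem Submodule.mem_orthogonalBilin_span_iff {R M₁ M₂ M : Type*} [CommSemiring R]
    [AddCommMonoid M₁] [Module R M₁] [AddCommMonoid M₂] [Module R M₂] [AddCommMonoid M]
    [Module R M] {B : M₁ →ₗ[R] M₂ →ₗ[R] M} {s : Set M₁} {y : M₂} :
    y ∈ (Submodule.span R s).orthogonalBilin B ↔ ∀ x ∈ s, B x y = 0 :=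
  ⟨fun h x hx => h x (Submodule.subset_span hx),
    fun h _ hx => (Submodule.span_le (p := LinearMap.ker (B.flip y))).2 h hx⟩

theorem mem_orthogonalBilin_span_of_nonneg {E F : Type*} [AddCommGroup E] [Module ℝ E]
    [AddCommGroup F] [Module ℝ F] {B : E →ₗ[ℝ] F →ₗ[ℝ] ℝ} {s : Set E} {y : F}
    (hneg : ∀ x ∈ s, ∃ t : ℝ, 0 < t ∧ t • -x ∈ s) (hy : ∀ x ∈ s, 0 ≤ B x y) :
    y ∈ (Submodule.span ℝ s).orthogonalBilin B := by
  refine Submodule.mem_orthogonalBilin_span_iff.2 fun x hx => ?_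
  obtain ⟨t, ht, htx⟩ := hneg x hx
  have htx' := hy _ htx
  simp only [map_smul, map_neg, LinearMap.smul_apply, LinearMap.neg_apply, smul_eq_mul] at htx'
  nlinarith [hy x hx]

theorem orthogonalBilin_dotProductBilin_inf_eq_bot {ι : Type*} [Fintype ι]
    {W W' : Submodule ℝ (ι → ℝ)} (h : W ⊔ W' = ⊤) :
    W.orthogonalBilin (dotProductBilin ℝ ℝ) ⊓ W'.orthogonalBilin (dotProductBilin ℝ ℝ) = ⊥ := by
  rw [eq_bot_iff]
  rintro z ⟨hzW, hzW'⟩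
  simp only [SetLike.mem_coe, Submodule.mem_orthogonalBilin_iff,
    dotProductBilin_apply_apply] at hzW hzW'
  obtain ⟨w, hw, w', hw', hz⟩ := Submodule.mem_sup.1 (h ▸ Submodule.mem_top : z ∈ W ⊔ W')
  have hzz : z ⬝ᵥ z = 0 :=
    calc z ⬝ᵥ z = w ⬝ᵥ z + w' ⬝ᵥ z := by rw [← add_dotProduct, hz]
      _ = 0 := by rw [hzW w hw, hzW' w' hw', add_zero]
  exact (Submodule.mem_bot ℝ).2 (dotProduct_self_eq_zero.1 hzz)

theorem mem_convexHull_of_mem_convexHull_union_submodule {E : Type*} [AddCommGroup E]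
    [Module ℝ E] {S : Set E} {K K' : Submodule ℝ E} (hKK' : K ⊓ K' = ⊥) (hSK' : S ⊆ K')
    (hS0 : 0 ∈ convexHull ℝ S) {y : E} (hy : y ∈ convexHull ℝ (S ∪ K)) (hyK' : y ∈ K') :
    y ∈ convexHull ℝ S := by
  rw [convexHull_union (convexHull_nonempty_iff.1 ⟨0, hS0⟩) ⟨0, K.zero_mem⟩,
    K.convex.convexHull_eq, mem_convexJoin] at hy
  obtain ⟨a, ha, b, hb, p, q, hp, hq, hpq, rfl⟩ := hy
  have haK' : a ∈ K' := convexHull_min hSK' K'.convex ha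
  have hqb : q • b = 0 := by
    have hqbK' : q • b ∈ K' := by
      simpa using K'.sub_mem hyK' (K'.smul_mem p haK')
    rw [← Submodule.mem_bot ℝ, ← hKK']
    exact ⟨K.smul_mem q hb, hqbK'⟩
  simpa [hqb] using (convex_convexHull ℝ S) ha hS0 hp hq hpq

end Orthogonal

section Pairing

variable {n : ℕ}

theorem pairR_eq_dotProduct (x y : Fin n → ℝ) : pairR x y = x ⬝ᵥ y := rfl

theorem convex_dualPoly (P : Set (Fin n → ℝ)) : Convex ℝ (dualPoly P) := by
  have hP : dualPoly P = ⋂ x ∈ P, {y | -1 ≤ dotProductBilin ℝ ℝ x y} := by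
    ext; simp [dualPoly, pairR_eq_dotProduct]
  exact hP ▸ convex_iInter₂ fun x _ => convex_halfSpace_ge (dotProductBilin ℝ ℝ x).isLinear (-1)

theorem IsLatticePt.exists_dotProduct_eq_intCast {x y : Fin n → ℝ} (hx : IsLatticePt x)
    (hy : IsLatticePt y) : ∃ m : ℤ, x ⬝ᵥ y = m := by
  choose a ha using hx
  choose b hb using hy
  exact ⟨∑ k, a k * b k, by simp [dotProduct, ha, hb]⟩

theorem IsLatticePoly.exists_latticePt_forall_dotProduct_le {P : Set (Fin n → ℝ)}
    (hP : IsLatticePoly P) (y : Fin n → ℝ) :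
    ∃ x ∈ P, IsLatticePt x ∧ ∀ x' ∈ P, x ⬝ᵥ y ≤ x' ⬝ᵥ y := by
  obtain ⟨V, hV, hVlat, rfl⟩ := hP
  obtain ⟨x, hx, hmin⟩ := V.exists_min_image (· ⬝ᵥ y) hV
  exact ⟨x, subset_convexHull ℝ _ hx, hVlat x hx, fun x' hx' =>
    convexHull_min hmin (convex_halfSpace_ge ((dotProductBilin ℝ ℝ).flip y).isLinear _) hx'⟩

theorem exists_forall_ne_eq_zero_of_neg_one_le_sum {ι : Type*} [Fintype ι] [Nonempty ι]
    {μ : ι → ℤ} (hμ : ∀ k, μ k ≤ 0) (hsum : -1 ≤ ∑ k, μ k) : ∃ k₀, ∀ k ≠ k₀, μ k = 0 := by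
  classical
  by_contra! hne
  obtain ⟨k₁, -, hk₁⟩ := hne (Classical.arbitrary ι)
  obtain ⟨k₂, hk₂₁, hk₂⟩ := hne k₁
  have hpair : ∑ k, μ k ≤ ∑ k ∈ {k₁, k₂}, μ k :=
    Finset.sum_le_sum_of_subset_of_nonpos' (Finset.subset_univ _) fun k _ _ => hμ k
  rw [Finset.sum_pair hk₂₁.symm] at hpair
  have := hμ k₁
  have := hμ k₂
  omega

end Pairing

section MinkowskiSum

variable {d r : ℕ} {Δ : Fin r → Set (Fin d → ℝ)}

theorem minkSum_subset_add (I : Finset (Fin r)) :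
    minkSum Δ ⊆ minkSumOver I Δ + minkSumOver Iᶜ Δ := by
  rintro _ ⟨f, hf, rfl⟩
  exact ⟨_, ⟨f, fun i _ => hf i, rfl⟩, _, ⟨f, fun i _ => hf i, rfl⟩, Finset.sum_add_sum_compl I f⟩

theorem zero_mem_minkSumOver (I : Finset (Fin r)) (h0 : ∀ i, (0 : Fin d → ℝ) ∈ Δ i) :
    (0 : Fin d → ℝ) ∈ minkSumOver I Δ :=
  ⟨0, fun i _ => h0 i, by simp⟩

theorem sum_le_dotProduct_of_mem_minkSumOver {I : Finset (Fin r)} {c : Fin r → ℝ}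
    {x y : Fin d → ℝ} (hc : ∀ i ∈ I, ∀ x ∈ Δ i, c i ≤ x ⬝ᵥ y) (hx : x ∈ minkSumOver I Δ) :
    ∑ i ∈ I, c i ≤ x ⬝ᵥ y := by
  obtain ⟨f, hf, rfl⟩ := hx
  rw [sum_dotProduct]
  exact Finset.sum_le_sum fun i hi => hc i hi (f i) (hf i hi)

theorem span_minkSumOver_sup_span_minkSumOver_compl_eq_top (hΔ : minkSum Δ ∈ 𝓝 0)
    (I : Finset (Fin r)) :
    Submodule.span ℝ (minkSumOver I Δ) ⊔ Submodule.span ℝ (minkSumOver Iᶜ Δ) = ⊤ := by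
  refine eq_top_iff.2 fun v _ => ?_
  obtain ⟨t, ht, htv⟩ := exists_pos_smul_mem_of_mem_nhds_zero hΔ v
  obtain ⟨a, ha, b, hb, hab⟩ := minkSum_subset_add I htv
  rw [← inv_smul_smul₀ ht.ne' v, ← hab]
  exact Submodule.smul_mem _ _
    (Submodule.add_mem_sup (Submodule.subset_span ha) (Submodule.subset_span hb))

end MinkowskiSum

namespace AreDualNefPartitions

variable {d r : ℕ} {Δ Nb : Fin r → Set (Fin d → ℝ)} {I : Finset (Fin r)}

theorem zero_mem_left (h : AreDualNefPartitions Δ Nb) (i : Fin r) : (0 : Fin d → ℝ) ∈ Δ i :=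
  (h.1.1 i).2

theorem zero_mem_right (h : AreDualNefPartitions Δ Nb) (i : Fin r) : (0 : Fin d → ℝ) ∈ Nb i :=
  (h.2.1.1 i).2

theorem minkSum_mem_nhds_zero (h : AreDualNefPartitions Δ Nb) : minkSum Δ ∈ 𝓝 0 :=
  mem_interior_iff_mem_nhds.1 h.1.2.1.2.1

theorem neg_ite_le_dotProduct (h : AreDualNefPartitions Δ Nb) {i j : Fin r} {x y : Fin d → ℝ}
    (hx : x ∈ Δ j) (hy : y ∈ Nb i) : -(if i = j then (1 : ℝ) else 0) ≤ x ⬝ᵥ y := by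
  rw [h.2.2.1 i] at hy
  exact hy j x hx

theorem dotProduct_nonneg_of_mem_minkSumOver (h : AreDualNefPartitions Δ Nb) {i : Fin r}
    (hi : i ∉ I) {x y : Fin d → ℝ} (hx : x ∈ minkSumOver I Δ) (hy : y ∈ Nb i) :
    0 ≤ x ⬝ᵥ y := by
  simpa using sum_le_dotProduct_of_mem_minkSumOver (c := 0) (fun j hj x' hx' => by
    simpa [(ne_of_mem_of_not_mem hj hi).symm] using h.neg_ite_le_dotProduct hx' hy) hx

theorem neg_one_le_dotProduct_of_mem_minkSumOver (h : AreDualNefPartitions Δ Nb) {i : Fin r}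
    (hi : i ∈ I) {x y : Fin d → ℝ} (hx : x ∈ minkSumOver I Δ) (hy : y ∈ Nb i) :
    -1 ≤ x ⬝ᵥ y := by
  have := sum_le_dotProduct_of_mem_minkSumOver
    (fun j _ x' hx' => h.neg_ite_le_dotProduct hx' hy) hx
  rwa [Finset.sum_neg_distrib, Finset.sum_ite_eq, if_pos hi] at this

theorem eq_zero_of_forall_dotProduct_nonneg (h : AreDualNefPartitions Δ Nb) {x : Fin d → ℝ}
    (hx : ∀ i, ∀ y ∈ Nb i, 0 ≤ x ⬝ᵥ y) : x = 0 := by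
  obtain ⟨t, ht, f, hf, hfx⟩ :=
    exists_pos_smul_mem_of_mem_nhds_zero (mem_interior_iff_mem_nhds.1 h.2.1.2.1.2.1) (-x)
  have hpos : 0 ≤ (t • -x) ⬝ᵥ x := by
    rw [hfx, sum_dotProduct]
    exact Finset.sum_nonneg fun i _ => dotProduct_comm x (f i) ▸ hx i _ (hf i)
  rw [smul_dotProduct, neg_dotProduct, smul_eq_mul] at hpos
  have hxx : 0 ≤ x ⬝ᵥ x := Finset.sum_nonneg fun i _ => mul_self_nonneg (x i)
  exact dotProduct_self_eq_zero.1 (by nlinarith)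

theorem nb_subset_orthogonalBilin_span_minkSumOver (h : AreDualNefPartitions Δ Nb)
    (h0 : (0 : Fin d → ℝ) ∈ intrinsicInterior ℝ (minkSumOver I Δ)) {j : Fin r} (hj : j ∉ I) :
    Nb j ⊆ (Submodule.span ℝ (minkSumOver I Δ)).orthogonalBilin (dotProductBilin ℝ ℝ) :=
  fun _ hy => mem_orthogonalBilin_span_of_nonneg
    (fun _ hx => exists_pos_smul_mem_of_zero_mem_intrinsicInterior h0
      (Submodule.neg_mem _ (Submodule.subset_span hx)))
    (fun _ hx => h.dotProduct_nonneg_of_mem_minkSumOver hj hx hy)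

theorem exists_pos_smul_neg_mem_minkSumOver_compl (h : AreDualNefPartitions Δ Nb)
    (h0 : (0 : Fin d → ℝ) ∈ intrinsicInterior ℝ (minkSumOver I Δ)) {b : Fin d → ℝ}
    (hb : b ∈ minkSumOver Iᶜ Δ) : ∃ t : ℝ, 0 < t ∧ t • -b ∈ minkSumOver Iᶜ Δ := by
  obtain ⟨t, ht, htb⟩ := exists_pos_smul_mem_of_mem_nhds_zero h.minkSum_mem_nhds_zero (-b)
  obtain ⟨a, ha, b', hb', hab⟩ := minkSum_subset_add I htb
  have hb'_eq : b' = t • -b - a := eq_sub_iff_add_eq'.2 hab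
  suffices hzero : t • b + b' = 0 by
    refine ⟨t, ht, ?_⟩
    rwa [smul_neg, ← eq_neg_of_add_eq_zero_right hzero]
  refine h.eq_zero_of_forall_dotProduct_nonneg fun i y hy => ?_
  by_cases hi : i ∈ I
  · have hi' : i ∉ Iᶜ := Finset.notMem_compl.2 hi
    rw [add_dotProduct, smul_dotProduct, smul_eq_mul]
    have := h.dotProduct_nonneg_of_mem_minkSumOver hi' hb hy
    have := h.dotProduct_nonneg_of_mem_minkSumOver hi' hb' hy
    positivity
  · have ha0 : a ⬝ᵥ y = 0 :=
      h.nb_subset_orthogonalBilin_span_minkSumOver h0 hi hy a (Submodule.subset_span ha)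
    have hneg : t • b + b' = -a := by rw [hb'_eq, smul_neg]; abel
    rw [hneg, neg_dotProduct, ha0, neg_zero]

theorem nb_subset_orthogonalBilin_span_minkSumOver_compl (h : AreDualNefPartitions Δ Nb)
    (h0 : (0 : Fin d → ℝ) ∈ intrinsicInterior ℝ (minkSumOver I Δ)) {i : Fin r} (hi : i ∈ I) :
    Nb i ⊆ (Submodule.span ℝ (minkSumOver Iᶜ Δ)).orthogonalBilin (dotProductBilin ℝ ℝ) :=
  fun _ hy => mem_orthogonalBilin_span_of_nonneg
    (fun _ hb => h.exists_pos_smul_neg_mem_minkSumOver_compl h0 hb)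
    (fun _ hx => h.dotProduct_nonneg_of_mem_minkSumOver (Finset.notMem_compl.2 hi) hx hy)

theorem span_minkSumOver_inf_span_minkSumOver_compl_eq_bot (h : AreDualNefPartitions Δ Nb)
    (h0 : (0 : Fin d → ℝ) ∈ intrinsicInterior ℝ (minkSumOver I Δ)) :
    Submodule.span ℝ (minkSumOver I Δ) ⊓ Submodule.span ℝ (minkSumOver Iᶜ Δ) = ⊥ := by
  refine eq_bot_iff.2 fun x ⟨hxI, hxJ⟩ => (Submodule.mem_bot ℝ).2 ?_
  refine h.eq_zero_of_forall_dotProduct_nonneg fun i y hy => le_of_eq ?_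
  by_cases hi : i ∈ I
  · exact (h.nb_subset_orthogonalBilin_span_minkSumOver_compl h0 hi hy x hxJ).symm
  · exact (h.nb_subset_orthogonalBilin_span_minkSumOver h0 hi hy x hxI).symm

theorem zero_mem_intrinsicInterior_minkSumOver_compl (h : AreDualNefPartitions Δ Nb)
    (h0 : (0 : Fin d → ℝ) ∈ intrinsicInterior ℝ (minkSumOver I Δ)) :
    (0 : Fin d → ℝ) ∈ intrinsicInterior ℝ (minkSumOver Iᶜ Δ) := by
  refine (zero_mem_intrinsicInterior_iff (zero_mem_minkSumOver _ h.zero_mem_left)).2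
    ⟨minkSum Δ, h.minkSum_mem_nhds_zero, ?_⟩
  rintro v ⟨hv, hvJ⟩
  obtain ⟨a, ha, b, hb, rfl⟩ := minkSum_subset_add I hv
  have haJ : a ∈ Submodule.span ℝ (minkSumOver Iᶜ Δ) := by
    simpa using Submodule.sub_mem _ hvJ (Submodule.subset_span hb)
  have ha0 : a = 0 := by
    rw [← Submodule.mem_bot ℝ, ← h.span_minkSumOver_inf_span_minkSumOver_compl_eq_bot h0]
    exact ⟨Submodule.subset_span ha, haJ⟩
  simpa [ha0] using hb

theorem exists_mem_nb_of_mem_dualPoly [Nonempty (Fin r)] (h : AreDualNefPartitions Δ Nb)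
    {v : Fin d → ℝ} (hv : IsLatticePt v) (hvΔ : v ∈ dualPoly (minkSum Δ)) : ∃ k, v ∈ Nb k := by
  choose X hXΔ hXlat hXmin using fun k => (h.1.1 k).1.exists_latticePt_forall_dotProduct_le v
  choose μ hμ using fun k => (hXlat k).exists_dotProduct_eq_intCast hv
  have hμ_nonpos : ∀ k, μ k ≤ 0 := fun k => by
    have := hXmin k 0 (h.zero_mem_left k)
    rw [hμ, zero_dotProduct] at this
    exact_mod_cast this
  have hμ_sum : -1 ≤ ∑ k, μ k := by
    have := hvΔ _ ⟨X, hXΔ, rfl⟩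
    rw [pairR_eq_dotProduct, sum_dotProduct] at this
    simp only [hμ] at this
    exact_mod_cast this
  obtain ⟨k₀, hk₀⟩ := exists_forall_ne_eq_zero_of_neg_one_le_sum hμ_nonpos hμ_sum
  refine ⟨k₀, (h.2.2.1 k₀).symm ▸ fun j x hx => ?_⟩
  refine le_trans ?_ ((hμ j).symm.trans_le (hXmin j x hx))
  split_ifs with hj
  · subst hj
    rw [Finset.sum_eq_single k₀ (fun k _ hk => hk₀ k hk) (by simp)] at hμ_sum
    exact_mod_cast hμ_sum
  · simp [hk₀ j (Ne.symm hj)]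

theorem dualPoly_minkSum_subset_convexHull [Nonempty (Fin r)] (h : AreDualNefPartitions Δ Nb) :
    dualPoly (minkSum Δ) ⊆ convexHull ℝ (⋃ k, Nb k) := by
  obtain ⟨V, -, hVlat, hV⟩ := h.1.2.1.2.2
  rw [hV]
  refine convexHull_mono fun v hvV => Set.mem_iUnion.2 ?_
  exact h.exists_mem_nb_of_mem_dualPoly (hVlat v hvV) (hV ▸ subset_convexHull ℝ _ hvV)

theorem convexHull_iUnion_nb_subset (h : AreDualNefPartitions Δ Nb)
    (h0 : (0 : Fin d → ℝ) ∈ intrinsicInterior ℝ (minkSumOver I Δ)) :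
    convexHull ℝ (⋃ i ∈ I, Nb i) ⊆
      ((Submodule.span ℝ (minkSumOver Iᶜ Δ)).orthogonalBilin (dotProductBilin ℝ ℝ) : Set _) ∩
        dualPoly (minkSumOver I Δ) :=
  convexHull_min
    (Set.iUnion₂_subset fun _ hi _ hy =>
      ⟨h.nb_subset_orthogonalBilin_span_minkSumOver_compl h0 hi hy,
        fun _ hx => h.neg_one_le_dotProduct_of_mem_minkSumOver hi hx hy⟩)
    ((Submodule.convex _).inter (convex_dualPoly _))

theorem subset_convexHull_iUnion_nb (h : AreDualNefPartitions Δ Nb) (hI : I.Nonempty)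
    (h0 : (0 : Fin d → ℝ) ∈ intrinsicInterior ℝ (minkSumOver I Δ)) :
    ((Submodule.span ℝ (minkSumOver Iᶜ Δ)).orthogonalBilin (dotProductBilin ℝ ℝ) : Set _) ∩
        dualPoly (minkSumOver I Δ) ⊆ convexHull ℝ (⋃ i ∈ I, Nb i) := by
  rintro y ⟨hyJ, hyI⟩
  have : Nonempty (Fin r) := ⟨hI.choose⟩
  have hyΔ : y ∈ dualPoly (minkSum Δ) := fun x hx => by
    obtain ⟨a, ha, b, hb, rfl⟩ := minkSum_subset_add I hx
    have hby : b ⬝ᵥ y = 0 := hyJ b (Submodule.subset_span hb)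
    rw [pairR_eq_dotProduct, add_dotProduct, hby, add_zero]
    exact hyI a ha
  have hsplit : (⋃ k, Nb k) ⊆ (⋃ i ∈ I, Nb i) ∪
      (Submodule.span ℝ (minkSumOver I Δ)).orthogonalBilin (dotProductBilin ℝ ℝ) := by
    refine Set.iUnion_subset fun k z hz => ?_
    by_cases hk : k ∈ I
    · exact Or.inl (Set.mem_iUnion₂.2 ⟨k, hk, hz⟩)
    · exact Or.inr (h.nb_subset_orthogonalBilin_span_minkSumOver h0 hk hz)
  have hbot := orthogonalBilin_dotProductBilin_inf_eq_bot
    (span_minkSumOver_sup_span_minkSumOver_compl_eq_top h.minkSum_mem_nhds_zero I)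
  have hIJ : (⋃ i ∈ I, Nb i) ⊆
      (Submodule.span ℝ (minkSumOver Iᶜ Δ)).orthogonalBilin (dotProductBilin ℝ ℝ) :=
    Set.iUnion₂_subset fun _ hi => h.nb_subset_orthogonalBilin_span_minkSumOver_compl h0 hi
  have h0I : (0 : Fin d → ℝ) ∈ convexHull ℝ (⋃ i ∈ I, Nb i) :=
    subset_convexHull ℝ _ (Set.mem_iUnion₂.2 ⟨_, hI.choose_spec, h.zero_mem_right _⟩)
  exact mem_convexHull_of_mem_convexHull_union_submodule hbot hIJ h0I
    (convexHull_mono hsplit (h.dualPoly_minkSum_subset_convexHull hyΔ)) hyJ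

end AreDualNefPartitions

theorem nef_partition_splitting_general {d r : ℕ}
    (Δ Nb : Fin r → Set (Fin d → ℝ))
    (h : AreDualNefPartitions Δ Nb)
    (I : Finset (Fin r)) (hI : I.Nonempty)
    (h0 : (0 : Fin d → ℝ) ∈ intrinsicInterior ℝ (minkSumOver I Δ)) :
    (0 : Fin d → ℝ) ∈ intrinsicInterior ℝ (minkSumOver Iᶜ Δ) ∧
    Submodule.span ℝ (minkSumOver I Δ) ⊓ Submodule.span ℝ (minkSumOver Iᶜ Δ) = ⊥ ∧
    Submodule.span ℝ (minkSumOver I Δ) ⊔ Submodule.span ℝ (minkSumOver Iᶜ Δ) = ⊤ ∧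
    convexHull ℝ (⋃ i ∈ I, Nb i) =
      {y | (∀ x ∈ Submodule.span ℝ (minkSumOver Iᶜ Δ), pairR x y = 0) ∧
           ∀ x ∈ minkSumOver I Δ, -1 ≤ pairR x y} :=
  ⟨h.zero_mem_intrinsicInterior_minkSumOver_compl h0,
    h.span_minkSumOver_inf_span_minkSumOver_compl_eq_bot h0,
    span_minkSumOver_sup_span_minkSumOver_compl_eq_top h.minkSum_mem_nhds_zero I,
    (h.convexHull_iUnion_nb_subset h0).antisymm (h.subset_convexHull_iUnion_nb hI h0)⟩

/-- For dual centered proper nef-partitions and a splitting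
`{1, …, r} = I ⊔ J` with `0` in the relative interior of `Δ^I`: `0` lies in the relative
interior of `Δ^J`, the linear spans of `Δ^I` and `Δ^J` split `ℝ^d`, and `∇_I` is the
dual of `Δ^I` inside the orthogonal complement of `lin(Δ^J)`. -/
theorem nef_partition_splitting {d r : ℕ}
    (Δ Nb : Fin r → Set (Fin d → ℝ))
    (h : AreDualNefPartitions Δ Nb)
    (hproper : ∀ i, 0 < polyDim (Δ i))
    (I : Finset (Fin r)) (hI : I.Nonempty) (hJ : Iᶜ.Nonempty)
    (h0 : (0 : Fin d → ℝ) ∈ intrinsicInterior ℝ (minkSumOver I Δ)) :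
    (0 : Fin d → ℝ) ∈ intrinsicInterior ℝ (minkSumOver Iᶜ Δ) ∧
    Submodule.span ℝ (minkSumOver I Δ) ⊓ Submodule.span ℝ (minkSumOver Iᶜ Δ) = ⊥ ∧
    Submodule.span ℝ (minkSumOver I Δ) ⊔ Submodule.span ℝ (minkSumOver Iᶜ Δ) = ⊤ ∧
    convexHull ℝ (⋃ i ∈ I, Nb i) =
      {y | (∀ x ∈ Submodule.span ℝ (minkSumOver Iᶜ Δ), pairR x y = 0) ∧
           ∀ x ∈ minkSumOver I Δ, -1 ≤ pairR x y} :=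
  nef_partition_splitting_general Δ Nb h I hI h0
end
end
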